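/- arXiv:2603.14190 — 5 statements merged into one kernel-verified Lean document; each statement's English description precedes it below -/
import Mathlib

section
/- Consider a Misra-Gries-style sketch processed over epochs, where during epoch j the array has W_j counters, d_j is the number of decrement events in epoch j, and the total counter sum C_j at the end of epoch j satisfies C_j = C_{j-1} + (N_j - N_{j-1}) - d_j·(W_j + 1) with C_{-1} = 0 and all C_j ≥ 0, and where W_0 < W_1 < ... < W_i. Then Σ_{j=0}^{i} d_j ≤ Σ_{j=0}^{i} (N_j - N_{j-1})/(W_j + 1). -/
/-- Misra-Gries-style sketch over epochs: during epoch `j` the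
array has `W j` counters (positive, strictly increasing across epochs), `d j`
is the number of decrement events of epoch `j`, and the total counter sum `C j`
at the end of epoch `j` satisfies
`C j = C (j-1) + (N j - N (j-1)) - d j · (W j + 1)` (with `C_{-1} = 0`,
`N_{-1} = 0`) and all `C j ≥ 0`. Then
`Σ_{j=0}^{i} d j ≤ Σ_{j=0}^{i} (N j - N (j-1))/(W j + 1)`. -/
theorem stmt8 (i : ℕ) (W N C d : ℕ → ℝ)
    (hW : ∀ j, 0 < W j) (hWmono : ∀ j, W j < W (j + 1))
    (hC0 : C 0 = (N 0 - 0) - d 0 * (W 0 + 1))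
    (hC : ∀ j, 1 ≤ j → C j = C (j - 1) + (N j - N (j - 1)) - d j * (W j + 1))
    (hCnn : ∀ j, 0 ≤ C j) :
    (∑ j ∈ Finset.range (i + 1), d j)
      ≤ (N 0 - 0) / (W 0 + 1)
          + ∑ j ∈ Finset.Icc 1 i, (N j - N (j - 1)) / (W j + 1) := by
  have hWp : ∀ j, (0:ℝ) < W j + 1 := fun j => by linarith [hW j]
  have key : ∀ k, (∑ j ∈ Finset.range (k + 1), d j) + C k / (W k + 1)
      ≤ (N 0 - 0) / (W 0 + 1)
          + ∑ j ∈ Finset.Icc 1 k, (N j - N (j - 1)) / (W j + 1) := by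
    intro k
    induction k with
    | zero =>
      rw [zero_add, Finset.sum_range_one, sub_zero,
        show Finset.Icc 1 0 = ∅ from Finset.Icc_eq_empty (by omega),
        Finset.sum_empty, add_zero]
      have h0 := hWp 0
      have : d 0 + C 0 / (W 0 + 1) = N 0 / (W 0 + 1) := by
        field_simp
        linarith [hC0]
      linarith [this.le]
    | succ n ih =>
      rw [Finset.sum_range_succ, Finset.sum_Icc_succ_top (Nat.le_add_left 1 n)]
      have hc : C (n+1) = C n + (N (n+1) - N n) - d (n+1) * (W (n+1) + 1) := by
        have h := hC (n + 1) (by omega)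
        rwa [Nat.add_sub_cancel] at h
      have hd : d (n + 1) = (C n + (N (n+1) - N n) - C (n+1)) / (W (n+1) + 1) := by
        rw [eq_div_iff (hWp (n+1)).ne']
        linarith [hc]
      have hmono : C n / (W (n+1) + 1) ≤ C n / (W n + 1) := by
        apply div_le_div_of_nonneg_left (hCnn n) (hWp n)
        linarith [hWmono n]
      have : d (n + 1) + C (n+1) / (W (n+1) + 1)
          ≤ (N (n+1) - N n) / (W (n+1) + 1) + C n / (W n + 1) := by
        rw [hd]
        have expand : (C n + (N (n+1) - N n) - C (n+1)) / (W (n+1) + 1)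
            + C (n+1) / (W (n+1) + 1)
            = (N (n+1) - N n) / (W (n+1) + 1) + C n / (W (n+1) + 1) := by
          field_simp
          ring
        rw [expand]
        linarith [hmono]
      simp only [Nat.add_sub_cancel]
      linarith [ih, this]
  have := key i
  have hc := hCnn i
  have : C i / (W i + 1) ≥ 0 := div_nonneg hc (le_of_lt (hWp i))
  linarith [key i]
end

section
/- In an expandable Misra-Gries sketch with size function W(N) = N/ε (counters added one at a time, so epoch boundaries satisfy W(N_{j}) = W(N_0) + j and N_j = N_0 + j·ε with N_0 = ε·W(N_0)), the estimation error after i expansions satisfies E(N_i) ≤ Σ_{j=0}^{i} (N_j - N_{j-1})/(W(N_j)+1) ≤ ε·(1 + ln i) ≤ ε·ln N for N large enough. -/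
/-- Key: `1/(x+1) ≤ log (x+1) - log x` for `x > 0`. -/
lemma log_gap (x : ℝ) (hx : 0 < x) : 1 / (x + 1) ≤ Real.log (x + 1) - Real.log x := by
  have h1 : Real.log (x / (x + 1)) ≤ x / (x + 1) - 1 :=
    Real.log_le_sub_one_of_pos (by positivity)
  rw [Real.log_div hx.ne' (by positivity)] at h1
  have h3 : x / (x + 1) - 1 = -(1 / (x + 1)) := by field_simp; ring
  linarith

/-- Reverse: `log (x+1) - log x ≤ 1/x` for `x > 0`. -/
lemma log_gap' (x : ℝ) (hx : 0 < x) : Real.log (x + 1) - Real.log x ≤ 1 / x := by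
  have h1 : Real.log ((x + 1) / x) ≤ (x + 1) / x - 1 :=
    Real.log_le_sub_one_of_pos (by positivity)
  rw [Real.log_div (by positivity) hx.ne'] at h1
  have h3 : (x + 1) / x - 1 = 1 / x := by field_simp; ring
  linarith

/-- Expandable Misra-Gries with the linear size function
`W(N) = N/ε`: counters are added one at a time, so epoch boundaries satisfy
`W j = W₀ + j` and `N j = ε·W₀ + j·ε` (i.e. `N₀ = ε·W₀`). If the estimation
error after `i` expansions satisfies
`E ≤ Σ_{j=0}^{i} (N_j - N_{j-1})/(W_j + 1)`, then
`E ≤ ε·(1 + ln i) ≤ ε·ln N_i` for `N` large enough (here: `N_i ≥ e·i`). -/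
theorem stmt9 (ε W0 : ℝ) (hε : 0 < ε) (hW0 : 1 ≤ W0)
    (i : ℕ) (hi : 1 ≤ i) (N W : ℕ → ℝ)
    (hN : ∀ j, N j = ε * W0 + (j : ℝ) * ε)
    (hW : ∀ j, W j = W0 + (j : ℝ))
    (E : ℝ)
    (hE : E ≤ N 0 / (W 0 + 1)
            + ∑ j ∈ Finset.Icc 1 i, (N j - N (j - 1)) / (W j + 1))
    (hbig : Real.exp 1 * (i : ℝ) ≤ N i) :
    E ≤ ε * (1 + Real.log i) ∧ ε * (1 + Real.log i) ≤ ε * Real.log (N i) := by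
  have hW0pos : (0 : ℝ) < W0 := lt_of_lt_of_le one_pos hW0
  have hipos : (0 : ℝ) < (i : ℝ) := by exact_mod_cast hi
  constructor
  · -- rewrite the sum over Icc 1 i as sum over range i
    have hsum0 : ∑ j ∈ Finset.Icc 1 i, (N j - N (j - 1)) / (W j + 1)
        = ∑ k ∈ Finset.range i, (N (1 + k) - N (1 + k - 1)) / (W (1 + k) + 1) := by
      rw [← Finset.Ico_add_one_right_eq_Icc, Finset.sum_Ico_eq_sum_range]
      simp
    -- each term equals ε/(W0 + k + 2) and is bounded by ε * (log gap)
    have hbound : ∀ k ∈ Finset.range i,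
        (N (1 + k) - N (1 + k - 1)) / (W (1 + k) + 1)
          ≤ ε * (Real.log (W0 + (k + 1 : ℝ) + 1) - Real.log (W0 + (k : ℝ) + 1)) := by
      intro k _
      have h1 : (1 + k - 1 : ℕ) = k := by omega
      have hterm : (N (1 + k) - N (1 + k - 1)) / (W (1 + k) + 1)
          = ε / (W0 + (k : ℝ) + 2) := by
        rw [h1, hN, hN, hW]
        push_cast
        ring_nf
      rw [hterm]
      have hx : (0 : ℝ) < W0 + (k : ℝ) + 1 := by positivity
      have := log_gap (W0 + (k : ℝ) + 1) hx
      have h2 : ε / (W0 + (k : ℝ) + 2) = ε * (1 / (W0 + (k : ℝ) + 1 + 1)) := by ring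
      have h3 : W0 + (k + 1 : ℝ) + 1 = W0 + (k : ℝ) + 1 + 1 := by ring
      rw [h2, h3]
      exact mul_le_mul_of_nonneg_left this hε.le
    have hsum1 : ∑ k ∈ Finset.range i,
        ε * (Real.log (W0 + (k + 1 : ℝ) + 1) - Real.log (W0 + (k : ℝ) + 1))
        = ε * (Real.log (W0 + (i : ℝ) + 1) - Real.log (W0 + 1)) := by
      rw [← Finset.mul_sum]
      congr 1
      have := Finset.sum_range_sub (fun k : ℕ => Real.log (W0 + (k : ℝ) + 1)) i
      simpa using this
    have hsum : ∑ j ∈ Finset.Icc 1 i, (N j - N (j - 1)) / (W j + 1)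
        ≤ ε * (Real.log (W0 + (i : ℝ) + 1) - Real.log (W0 + 1)) := by
      rw [hsum0, ← hsum1]
      exact Finset.sum_le_sum hbound
    -- first term
    have hfirst : N 0 / (W 0 + 1) = ε * (W0 / (W0 + 1)) := by
      rw [hN, hW]
      push_cast
      ring_nf
    -- log(W0+i+1) ≤ log i + log(W0+2)
    have hlog1 : Real.log (W0 + (i : ℝ) + 1) ≤ Real.log (i : ℝ) + Real.log (W0 + 2) := by
      rw [← Real.log_mul (ne_of_gt hipos) (by positivity)]
      apply Real.log_le_log (by positivity)
      nlinarith [hipos, hW0pos, (show (1 : ℝ) ≤ (i : ℝ) by exact_mod_cast hi)]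
    have hlog2 : Real.log (W0 + 2) - Real.log (W0 + 1) ≤ 1 / (W0 + 1) := by
      have := log_gap' (W0 + 1) (by positivity)
      have h : W0 + 1 + 1 = W0 + 2 := by ring
      rw [h] at this
      exact this
    -- combine
    have hcomb : W0 / (W0 + 1) + (Real.log (W0 + (i : ℝ) + 1) - Real.log (W0 + 1))
        ≤ 1 + Real.log (i : ℝ) := by
      have h4 : W0 / (W0 + 1) = 1 - 1 / (W0 + 1) := by field_simp; ring
      linarith
    calc E ≤ N 0 / (W 0 + 1) + ∑ j ∈ Finset.Icc 1 i, (N j - N (j - 1)) / (W j + 1) := hE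
      _ ≤ ε * (W0 / (W0 + 1)) + ε * (Real.log (W0 + (i : ℝ) + 1) - Real.log (W0 + 1)) := by
          rw [hfirst]; linarith [hsum]
      _ = ε * (W0 / (W0 + 1) + (Real.log (W0 + (i : ℝ) + 1) - Real.log (W0 + 1))) := by ring
      _ ≤ ε * (1 + Real.log (i : ℝ)) := mul_le_mul_of_nonneg_left hcomb hε.le
  · apply mul_le_mul_of_nonneg_left _ hε.le
    have hNpos : (0 : ℝ) < Real.exp 1 * (i : ℝ) := by positivity
    have h1 : Real.log (Real.exp 1 * (i : ℝ)) ≤ Real.log (N i) :=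
      Real.log_le_log hNpos hbig
    rw [Real.log_mul (Real.exp_ne_zero 1) (ne_of_gt hipos), Real.log_exp] at h1
    linarith
end

section
/- With the linear size function W(N) = N/ε (so N_j = 2^j·N_0 and W_i = N_i/ε), the expected overestimation error of the single-array expandable Count-Min sketch at the end of epoch i satisfies E[E(N_{i+1})] ≤ (1/W_i)·Σ_{j=0}^{i} 2^{i-j}·(N_{j+1}-N_j) = (i+1)·N_i/W_i = (i+1)·ε ≤ ε·log₂(N). -/
/-- With the linear size function `W(N) = N/ε` (so `N_j = 2^j·N₀`
and `W_i = N_i/ε`), the expected overestimation error of the single-array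
expandable Count-Min sketch at the end of epoch `i` satisfies
`E ≤ (1/W_i)·Σ_{j=0}^{i} 2^{i-j}(N_{j+1}-N_j) = (i+1)·N_i/W_i = (i+1)·ε
   ≤ ε·log₂ N_{i+1}`. -/
theorem stmt12 (ε N0 : ℝ) (hε : 0 < ε) (hN0 : 1 ≤ N0)
    (N W : ℕ → ℝ)
    (hN : ∀ j, N j = 2 ^ j * N0)
    (hW : ∀ j, W j = N j / ε)
    (i : ℕ) (E : ℝ)
    (hE : E ≤ (1 / W i) * ∑ j ∈ Finset.range (i + 1),
            (2 : ℝ) ^ (i - j) * (N (j + 1) - N j)) :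
    ((1 / W i) * ∑ j ∈ Finset.range (i + 1),
        (2 : ℝ) ^ (i - j) * (N (j + 1) - N j)) = ((i : ℝ) + 1) * ε ∧
    ((i : ℝ) + 1) * ε = ((i : ℝ) + 1) * N i / W i ∧
    E ≤ ε * Real.logb 2 (N (i + 1)) := by
  have hN0pos : (0 : ℝ) < N0 := lt_of_lt_of_le one_pos hN0
  have hNipos : (0 : ℝ) < N i := by rw [hN]; positivity
  have hWi : W i = N i / ε := hW i
  have hsum : ∑ j ∈ Finset.range (i + 1),
      (2 : ℝ) ^ (i - j) * (N (j + 1) - N j) = ((i : ℝ) + 1) * N i := by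
    have : ∀ j ∈ Finset.range (i + 1),
        (2 : ℝ) ^ (i - j) * (N (j + 1) - N j) = N i := by
      intro j hj
      rw [Finset.mem_range] at hj
      have hji : j ≤ i := Nat.lt_succ_iff.mp hj
      rw [hN, hN, hN]
      have h2 : (2 : ℝ) ^ (j + 1) * N0 - 2 ^ j * N0 = 2 ^ j * N0 := by ring
      rw [h2, ← mul_assoc, ← pow_add, Nat.sub_add_cancel hji]
    rw [Finset.sum_congr rfl this, Finset.sum_const, Finset.card_range]
    push_cast [nsmul_eq_mul]
    ring
  have heq1 : ((1 : ℝ) / W i) * ∑ j ∈ Finset.range (i + 1),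
      (2 : ℝ) ^ (i - j) * (N (j + 1) - N j) = ((i : ℝ) + 1) * ε := by
    rw [hsum, hWi]
    field_simp
  refine ⟨heq1, ?_, ?_⟩
  · rw [hWi]; field_simp
  · have hlog : ((i : ℝ) + 1) ≤ Real.logb 2 (N (i + 1)) := by
      rw [hN]
      have h1 : Real.logb 2 ((2 : ℝ) ^ (i + 1) * N0)
          = (i + 1 : ℕ) + Real.logb 2 N0 := by
        rw [Real.logb_mul (by positivity) (by positivity),
          Real.logb_pow, Real.logb_self_eq_one (by norm_num)]
        ring
      rw [h1]
      have : (0 : ℝ) ≤ Real.logb 2 N0 :=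
        Real.logb_nonneg (by norm_num) hN0
      push_cast
      linarith
    calc E ≤ ((i : ℝ) + 1) * ε := heq1 ▸ hE
      _ ≤ Real.logb 2 (N (i + 1)) * ε := by
          apply mul_le_mul_of_nonneg_right hlog hε.le
      _ = ε * Real.logb 2 (N (i + 1)) := mul_comm _ _
end

section
/- For a random variable contribution C(x) = Σ_{j=0}^{i} C_{j,I}(x)·f_j(x)·σ(x) where σ(x) ∈ {-1,+1} is uniform, the C_{j,I} satisfy C_{j,I}·C_{k,I} = C_{k,I} for j ≤ k with E[C_{k,I}] ≤ 2^{i-k}/W_i, and f_{≤j}(x) = Σ_{m=0}^{j} f_m(x): then E[C(x)²] ≤ Σ_{j=0}^{i} (f_{≤j}(x)² - f_{≤j-1}(x)²)·(2^{i-j}/W_i), using the identity f_j² + 2·f_j·f_{≤j-1} = f_{≤j}² - f_{≤j-1}². -/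
open MeasureTheory

/-- For the contribution
`C(x) = (Σ_{j=0}^{i} C_j·f_j)·σ` where `σ ∈ {-1,+1}`, the `C_j` are
`{0,1}`-valued indicators with the prefix monotonicity `C_j·C_k = C_k` for
`j ≤ k` and `E[C_k] ≤ 2^{i-k}/W_i`, and `f_{≤ j} = Σ_{m=0}^{j} f_m` (with
`f_{≤ -1} = 0`): then
`E[C(x)²] ≤ Σ_{j=0}^{i} (f_{≤j}² - f_{≤j-1}²)·(2^{i-j}/W_i)`. -/
theorem stmt15 {Ω : Type*} [MeasureSpace Ω]
    [IsProbabilityMeasure (volume : Measure Ω)]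
    (i : ℕ) (Wi : ℝ) (hWi : 0 < Wi)
    (C : ℕ → Ω → ℝ) (σs : Ω → ℝ) (f : ℕ → ℝ)
    (hf : ∀ j, 0 ≤ f j)
    (hσ : ∀ ω, σs ω = 1 ∨ σs ω = -1)
    (hCmeas : ∀ j, Measurable (C j))
    (hCind : ∀ j ω, C j ω = 0 ∨ C j ω = 1)
    (hmono : ∀ j k, j ≤ k → ∀ ω, C j ω * C k ω = C k ω)
    (hE : ∀ k, k ≤ i → (∫ ω, C k ω) ≤ 2 ^ (i - k) / Wi)
    (Cx : Ω → ℝ)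
    (hCx : ∀ ω, Cx ω = (∑ j ∈ Finset.range (i + 1), C j ω * f j) * σs ω) :
    (∫ ω, (Cx ω) ^ 2)
      ≤ ∑ j ∈ Finset.range (i + 1),
          ((∑ m ∈ Finset.range (j + 1), f m) ^ 2
            - (∑ m ∈ Finset.range j, f m) ^ 2) * ((2 : ℝ) ^ (i - j) / Wi) := by
  set S : ℕ → ℝ := fun j => ∑ m ∈ Finset.range j, f m with hS
  -- pointwise expansion
  have key : ∀ ω, (Cx ω) ^ 2
      = ∑ j ∈ Finset.range (i + 1), C j ω * (S (j + 1) ^ 2 - S j ^ 2) := by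
    intro ω
    have hσ2 : σs ω ^ 2 = 1 := by rcases hσ ω with h | h <;> simp [h]
    rw [hCx, mul_pow, hσ2, mul_one]
    -- induction on range
    have main : ∀ n : ℕ, (∑ j ∈ Finset.range n, C j ω * f j) ^ 2
        = ∑ j ∈ Finset.range n, C j ω * (S (j + 1) ^ 2 - S j ^ 2) := by
      intro n
      induction n with
      | zero => simp
      | succ n ih =>
        rw [Finset.sum_range_succ, Finset.sum_range_succ, ← ih]
        have hCn2 : C n ω * C n ω = C n ω := hmono n n le_rfl ω
        have hAC : (∑ j ∈ Finset.range n, C j ω * f j) * C n ω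
            = C n ω * S n := by
          rw [Finset.sum_mul]
          rw [hS]
          simp only
          rw [Finset.mul_sum]
          apply Finset.sum_congr rfl
          intro j hj
          have := hmono j n (Nat.le_of_lt (Finset.mem_range.mp hj)) ω
          rw [mul_comm (C j ω) (f j), mul_assoc, this]
          ring
        have hSsucc : S (n + 1) = S n + f n := Finset.sum_range_succ f n
        have : ((∑ j ∈ Finset.range n, C j ω * f j) + C n ω * f n) ^ 2
            = (∑ j ∈ Finset.range n, C j ω * f j) ^ 2
              + 2 * ((∑ j ∈ Finset.range n, C j ω * f j) * C n ω) * f n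
              + (C n ω * C n ω) * f n ^ 2 := by ring
        rw [this, hAC, hCn2, hSsucc]
        ring
    exact main (i + 1)
  -- integrability of each C j
  have hint : ∀ j, Integrable (C j) := by
    intro j
    refine (integrable_const (1 : ℝ)).mono' (hCmeas j).aestronglyMeasurable ?_
    filter_upwards with ω
    rcases hCind j ω with h | h <;> simp [h]
  have hint2 : ∀ j, Integrable (fun ω => C j ω * (S (j + 1) ^ 2 - S j ^ 2)) :=
    fun j => (hint j).mul_const _
  calc (∫ ω, (Cx ω) ^ 2)
      = ∫ ω, ∑ j ∈ Finset.range (i + 1), C j ω * (S (j + 1) ^ 2 - S j ^ 2) := by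
        simp_rw [key]
    _ = ∑ j ∈ Finset.range (i + 1), ∫ ω, C j ω * (S (j + 1) ^ 2 - S j ^ 2) :=
        integral_finset_sum _ (fun j _ => hint2 j)
    _ = ∑ j ∈ Finset.range (i + 1), (∫ ω, C j ω) * (S (j + 1) ^ 2 - S j ^ 2) := by
        simp_rw [integral_mul_const]
    _ ≤ ∑ j ∈ Finset.range (i + 1),
          (S (j + 1) ^ 2 - S j ^ 2) * ((2 : ℝ) ^ (i - j) / Wi) := by
        apply Finset.sum_le_sum
        intro j hj
        have hjle : j ≤ i := Nat.lt_succ_iff.mp (Finset.mem_range.mp hj)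
        have hco : 0 ≤ S (j + 1) ^ 2 - S j ^ 2 := by
          have h1 : S j ≤ S (j + 1) := by
            rw [hS]
            exact Finset.sum_le_sum_of_subset_of_nonneg
              (Finset.range_subset_range.mpr (Nat.le_succ j)) (fun m _ _ => hf m)
          have h2 : 0 ≤ S j := Finset.sum_nonneg (fun m _ => hf m)
          have := pow_le_pow_left₀ h2 h1 2
          linarith
        rw [mul_comm]
        exact mul_le_mul_of_nonneg_left (hE j hjle) hco
end

section
/- For the expandable Count Sketch with squared ℓ₂-norm milestones F_j = 2^{1/(1-α)·j}·F₀ (sublinear regime, 0 < α < 1) and array sizes W satisfying W_i ≥ F_i^α/ε, the variance bound (1/W_i)·Σ_{j=0}^{i} 2^{i-j}·(F_{j+1} - F_j) = O(F_{i+1}/W_i) holds, i.e., it is at most a constant (depending only on α) times ε·F_{i+1}^{1-α}. -/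
open Real Finset

/-- For the expandable Count Sketch with squared `ℓ₂`-norm
milestones `F_j = 2^{j/(1-α)}·F₀` (sublinear regime, `0 < α < 1`) and array
sizes satisfying `W_i ≥ F_i^α/ε`, the variance bound
`(1/W_i)·Σ_{j=0}^{i} 2^{i-j}·(F_{j+1} - F_j) = O(F_{i+1}/W_i)` holds, i.e. it
is at most a constant (depending only on `α`) times `ε·F_{i+1}^{1-α}`. -/
theorem stmt17 (α : ℝ) (hα0 : 0 < α) (hα1 : α < 1) :
    ∃ Cα : ℝ, 0 < Cα ∧
      ∀ (ε F0 : ℝ), 0 < ε → 0 < F0 →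
      ∀ (F : ℕ → ℝ), (∀ j, F j = (2 : ℝ) ^ ((j : ℝ) / (1 - α)) * F0) →
      ∀ (i : ℕ) (Wi : ℝ), (F i) ^ α / ε ≤ Wi →
        (1 / Wi) * (∑ j ∈ Finset.range (i + 1),
            (2 : ℝ) ^ (i - j) * (F (j + 1) - F j))
          ≤ Cα * (ε * (F (i + 1)) ^ (1 - α)) := by
  have h1α : (0:ℝ) < 1 - α := by linarith
  set b : ℝ := 1 / (1 - α) with hbdef
  have hb1 : 1 < b := by
    rw [hbdef, lt_div_iff₀ h1α]; linarith
  have hb0 : 0 < b := by linarith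
  have hbα : b * (1 - α) = 1 := by
    rw [hbdef]; field_simp
  set r : ℝ := (2:ℝ) ^ (b - 1) with hrdef
  have hr1 : 1 < r := by
    rw [hrdef]
    exact Real.one_lt_rpow_iff_of_pos (by norm_num) |>.mpr (Or.inl ⟨by norm_num, by linarith⟩)
  have h2b : (1:ℝ) < (2:ℝ) ^ b :=
    Real.one_lt_rpow_iff_of_pos (by norm_num) |>.mpr (Or.inl ⟨by norm_num, hb0⟩)
  refine ⟨((2:ℝ)^b - 1) * (2:ℝ)^b / (r - 1),
    div_pos (mul_pos (by linarith) (by linarith)) (by linarith), ?_⟩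
  intro ε F0 hε hF0 F hF i Wi hW
  have hbj : ∀ j : ℕ, (j:ℝ)/(1-α) = (j:ℝ)*b := by
    intro j; rw [hbdef]; ring
  have hFpos : ∀ j, 0 < F j := by
    intro j; rw [hF]
    exact mul_pos (Real.rpow_pos_of_pos (by norm_num) _) hF0
  have hWpos : 0 < Wi :=
    lt_of_lt_of_le (div_pos (Real.rpow_pos_of_pos (hFpos i) α) hε) hW
  -- rewrite the sum
  have hsum : ∑ j ∈ Finset.range (i+1), (2:ℝ)^(i-j)*(F (j+1) - F j)
      = (F0 * ((2:ℝ)^b - 1) * (2:ℝ)^(i:ℝ)) * ∑ j ∈ Finset.range (i+1), r ^ j := by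
    rw [Finset.mul_sum]
    apply Finset.sum_congr rfl
    intro j hj
    have hji : j ≤ i := Nat.lt_succ_iff.mp (Finset.mem_range.mp hj)
    have h2 : (2:ℝ)^(i-j) = (2:ℝ)^((i:ℝ) - (j:ℝ)) := by
      rw [← Real.rpow_natCast 2 (i-j), Nat.cast_sub hji]
    have hrj : r ^ j = (2:ℝ)^((b-1)*(j:ℝ)) := by
      rw [hrdef, ← Real.rpow_natCast ((2:ℝ)^(b-1)) j, ← Real.rpow_mul (by norm_num)]
    rw [h2, hF (j+1), hF j, hrj, hbj (j+1), hbj j]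
    push_cast
    have e1 : ((j:ℝ)+1)*b = (j:ℝ)*b + b := by ring
    rw [e1, Real.rpow_add (by norm_num : (0:ℝ) < 2)]
    have e2 : (2:ℝ)^((i:ℝ)-(j:ℝ)) * 2^((j:ℝ)*b) = 2^((i:ℝ)) * 2^((b-1)*(j:ℝ)) := by
      rw [← Real.rpow_add (by norm_num : (0:ℝ) < 2),
        ← Real.rpow_add (by norm_num : (0:ℝ) < 2)]
      congr 1; ring
    linear_combination F0 * ((2:ℝ)^b - 1) * e2
  have hgeom : ∑ j ∈ Finset.range (i+1), r ^ j = (r^(i+1) - 1)/(r - 1) :=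
    geom_sum_eq (by linarith) (i+1)
  have hSnn : 0 ≤ ∑ j ∈ Finset.range (i+1), r ^ j := by
    apply Finset.sum_nonneg; intro j _; positivity
  have hstep1 : (1 / Wi) * (∑ j ∈ Finset.range (i+1), (2:ℝ)^(i-j)*(F (j+1) - F j))
      ≤ (ε / (F i)^α) * ((F0 * ((2:ℝ)^b - 1) * (2:ℝ)^(i:ℝ)) * ((r^(i+1))/(r - 1))) := by
    rw [hsum]
    have h1 : 1 / Wi ≤ ε / (F i)^α := by
      rw [div_le_div_iff₀ hWpos (Real.rpow_pos_of_pos (hFpos i) α)]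
      have := (div_le_iff₀ hε).mp hW
      nlinarith
    have h2 : (F0 * ((2:ℝ)^b - 1) * (2:ℝ)^(i:ℝ)) * ∑ j ∈ Finset.range (i+1), r ^ j
        ≤ (F0 * ((2:ℝ)^b - 1) * (2:ℝ)^(i:ℝ)) * ((r^(i+1))/(r - 1)) := by
      rw [hgeom]
      have hC : 0 ≤ F0 * ((2:ℝ)^b - 1) * (2:ℝ)^(i:ℝ) :=
        mul_nonneg (mul_nonneg hF0.le (by linarith)) (Real.rpow_pos_of_pos (by norm_num) _).le
      apply mul_le_mul_of_nonneg_left _ hC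
      apply div_le_div_of_nonneg_right _ (by linarith)
      · linarith
    calc (1 / Wi) * _ ≤ (ε / (F i)^α) * ((F0 * ((2:ℝ)^b - 1) * (2:ℝ)^(i:ℝ)) * ∑ j ∈ Finset.range (i+1), r ^ j) := by
          apply mul_le_mul_of_nonneg_right h1
          have hC : 0 ≤ F0 * ((2:ℝ)^b - 1) * (2:ℝ)^(i:ℝ) :=
            mul_nonneg (mul_nonneg hF0.le (by linarith)) (Real.rpow_pos_of_pos (by norm_num) _).le
          exact mul_nonneg hC hSnn
      _ ≤ _ := by
          apply mul_le_mul_of_nonneg_left h2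
          exact div_nonneg hε.le (Real.rpow_pos_of_pos (hFpos i) α).le
  refine le_trans hstep1 ?_
  -- now an explicit computation
  have hFia : (F i)^α = (2:ℝ)^((i:ℝ)*b*α) * F0^α := by
    rw [hF i, hbj i, Real.mul_rpow (Real.rpow_nonneg (by norm_num) _) hF0.le,
      ← Real.rpow_mul (by norm_num)]
  have hFi1 : (F (i+1))^(1-α) = (2:ℝ)^((i:ℝ)+1) * F0^(1-α) := by
    rw [hF (i+1), hbj (i+1), Real.mul_rpow (Real.rpow_nonneg (by norm_num) _) hF0.le,
      ← Real.rpow_mul (by norm_num)]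
    push_cast
    congr 2
    linear_combination ((i:ℝ)+1) * hbα
  have hri1 : r^(i+1) = (2:ℝ)^((b-1)*((i:ℝ)+1)) := by
    rw [hrdef, ← Real.rpow_natCast ((2:ℝ)^(b-1)) (i+1), ← Real.rpow_mul (by norm_num)]
    push_cast; ring_nf
  rw [hFia, hFi1, hri1]
  -- all positive atoms; reduce
  have e2 : (2:ℝ)^(i:ℝ) * 2^((b-1)*((i:ℝ)+1)) = 2^((i:ℝ)*b*α) * 2^((i:ℝ)+b-1) := by
    rw [← Real.rpow_add (by norm_num : (0:ℝ) < 2),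
      ← Real.rpow_add (by norm_num : (0:ℝ) < 2)]
    congr 1
    linear_combination (i:ℝ) * hbα
  have e3 : F0 ^ α * F0 ^ (1-α) = F0 := by
    rw [← Real.rpow_add hF0]; norm_num
  have epow : (2:ℝ)^((i:ℝ)+b-1) ≤ (2:ℝ)^b * (2:ℝ)^((i:ℝ)+1) := by
    rw [← Real.rpow_add (by norm_num : (0:ℝ) < 2)]
    apply Real.rpow_le_rpow_of_exponent_le (by norm_num)
    linarith
  -- final algebra
  have hX : (0:ℝ) < (2:ℝ)^((i:ℝ)*b*α) * F0^α := by positivity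
  rw [div_mul_eq_mul_div, div_le_iff₀ hX]
  have hr0 : (0:ℝ) < r - 1 := by linarith
  have hnn : (0:ℝ) ≤ ε * ((2:ℝ)^b-1) * F0 * (2:ℝ)^((i:ℝ)*b*α) :=
    mul_nonneg (mul_nonneg (mul_nonneg hε.le (by linarith)) hF0.le)
      (Real.rpow_pos_of_pos (by norm_num) _).le
  have key : ε * (F0 * ((2:ℝ)^b-1) * (2:ℝ)^(i:ℝ) * (2:ℝ)^((b-1)*((i:ℝ)+1)))
      ≤ ((2:ℝ)^b-1)*(2:ℝ)^b*(ε*((2:ℝ)^((i:ℝ)+1)*F0^(1-α)))*((2:ℝ)^((i:ℝ)*b*α)*F0^α) := by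
    calc ε * (F0 * ((2:ℝ)^b-1) * (2:ℝ)^(i:ℝ) * (2:ℝ)^((b-1)*((i:ℝ)+1)))
        = (ε * ((2:ℝ)^b-1) * F0 * (2:ℝ)^((i:ℝ)*b*α)) * (2:ℝ)^((i:ℝ)+b-1) := by
          linear_combination ε * (F0*((2:ℝ)^b-1)) * e2
      _ ≤ (ε * ((2:ℝ)^b-1) * F0 * (2:ℝ)^((i:ℝ)*b*α)) * ((2:ℝ)^b * (2:ℝ)^((i:ℝ)+1)) :=
          mul_le_mul_of_nonneg_left epow hnn
      _ = ((2:ℝ)^b-1)*(2:ℝ)^b*(ε*((2:ℝ)^((i:ℝ)+1)*F0^(1-α)))*((2:ℝ)^((i:ℝ)*b*α)*F0^α) := by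
          linear_combination (-(((2:ℝ)^b-1)*(2:ℝ)^b*ε*(2:ℝ)^((i:ℝ)+1)*(2:ℝ)^((i:ℝ)*b*α))) * e3
  calc ε * (F0 * ((2:ℝ)^b - 1) * (2:ℝ)^(i:ℝ) * ((2:ℝ)^((b-1)*((i:ℝ)+1)) / (r - 1)))
      = (ε * (F0 * ((2:ℝ)^b-1) * (2:ℝ)^(i:ℝ) * (2:ℝ)^((b-1)*((i:ℝ)+1)))) / (r - 1) := by
        ring
    _ ≤ (((2:ℝ)^b-1)*(2:ℝ)^b*(ε*((2:ℝ)^((i:ℝ)+1)*F0^(1-α)))*((2:ℝ)^((i:ℝ)*b*α)*F0^α)) / (r - 1) := by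
        apply div_le_div_of_nonneg_right key hr0.le
    _ = ((2:ℝ)^b-1)*(2:ℝ)^b/(r-1)*(ε*((2:ℝ)^((i:ℝ)+1)*F0^(1-α)))*((2:ℝ)^((i:ℝ)*b*α)*F0^α) := by
        ring
end
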